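/- Let 0 < δ < 2, q ≥ 1, and let ψ: ℝ^N → ℝ be a nonnegative Schwartz function. Define the fractional Laplacian by (-Δ)^(δ/2)ψ(x) = -c_N(δ) ∫_{ℝ^N} (ψ(x+z) - ψ(x))/|z|^(N+δ) dz (principal value integral), where c_N(δ) > 0 is a normalization constant. Then for every x ∈ ℝ^N: (-Δ)^(δ/2)(ψ^q)(x) ≤ q · ψ(x)^(q-1) · (-Δ)^(δ/2)ψ(x). -/

import Mathlib

/-!
The map `a ↦ a ^ q` is convex on `[0, ∞)` for `q ≥ 1`, so it lies above its tangent line at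
`ψ x`: `ψ(x+z)^q - ψ(x)^q ≥ q ψ(x)^(q-1) (ψ(x+z) - ψ(x))`. Dividing by the positive kernel
`|z|^(N+δ)` and integrating preserves this, and multiplying by `-c ≤ 0` reverses it.
-/

open MeasureTheory

theorem Real.mul_rpow_sub_one_mul_sub_le_rpow_sub_rpow {a b q : ℝ} (ha : 0 ≤ a) (hb : 0 ≤ b)
    (hq : 1 ≤ q) : q * b ^ (q - 1) * (a - b) ≤ a ^ q - b ^ q := by
  rcases hb.eq_or_lt with rfl | hb
  · rcases hq.eq_or_lt with rfl | hq
    · simp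
    · simpa [Real.zero_rpow (by linarith : q ≠ 0), Real.zero_rpow (by linarith : q - 1 ≠ 0)]
        using Real.rpow_nonneg ha q
  · -- Bernoulli's inequality for `a / b = 1 + (a / b - 1)`, scaled by `b ^ q`.
    have bernoulli : 1 + q * (a / b - 1) ≤ a ^ q / b ^ q := by
      have h := one_add_mul_self_le_rpow_one_add (s := a / b - 1)
        (by linarith [div_nonneg ha hb.le]) hq
      rwa [add_sub_cancel, Real.div_rpow ha hb.le] at h
    have hbq : 0 < b ^ q := Real.rpow_pos_of_pos hb q
    have hbq' : b ^ q = b ^ (q - 1) * b := by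
      rw [Real.rpow_sub hb, Real.rpow_one, div_mul_cancel₀ _ hb.ne']
    have scaled := mul_le_mul_of_nonneg_right bernoulli hbq.le
    rw [div_mul_cancel₀ _ hbq.ne'] at scaled
    have tangent : (1 + q * (a / b - 1)) * b ^ q = b ^ q + q * b ^ (q - 1) * (a - b) := by
      rw [hbq']; field_simp
    linarith

theorem mul_integral_le_integral_of_forall_mul_sub_le {α : Type*} [MeasurableSpace α]
    {μ : Measure α} {f w : α → ℝ} {F : ℝ → ℝ} {t K : ℝ} (hw : ∀ z, 0 ≤ w z)
    (hF : ∀ z, K * (f z - t) ≤ F (f z) - F t)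
    (hf : Integrable (fun z => (f z - t) / w z) μ)
    (hFf : Integrable (fun z => (F (f z) - F t) / w z) μ) :
    K * ∫ z, (f z - t) / w z ∂μ ≤ ∫ z, (F (f z) - F t) / w z ∂μ := by
  rw [← integral_const_mul]
  refine integral_mono (hf.const_mul K) hFf fun z => ?_
  rw [← mul_div_assoc]
  exact div_le_div_of_nonneg_right (hF z) (hw z)

theorem stmt_2_general (N : ℕ) (δ q c : ℝ)
    (hq : 1 ≤ q) (hc : 0 < c)
    (ψ : SchwartzMap (EuclideanSpace ℝ (Fin N)) ℝ)
    (hψ : ∀ x, 0 ≤ ψ x)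
    (L Lq : EuclideanSpace ℝ (Fin N) → ℝ)
    (hint : ∀ x, Integrable (fun z : EuclideanSpace ℝ (Fin N) =>
      (ψ (x + z) - ψ x) / ‖z‖ ^ ((N : ℝ) + δ)))
    (hintq : ∀ x, Integrable (fun z : EuclideanSpace ℝ (Fin N) =>
      (ψ (x + z) ^ q - ψ x ^ q) / ‖z‖ ^ ((N : ℝ) + δ)))
    (hL : ∀ x, L x = -c * ∫ z : EuclideanSpace ℝ (Fin N),
      (ψ (x + z) - ψ x) / ‖z‖ ^ ((N : ℝ) + δ))
    (hLq : ∀ x, Lq x = -c * ∫ z : EuclideanSpace ℝ (Fin N),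
      (ψ (x + z) ^ q - ψ x ^ q) / ‖z‖ ^ ((N : ℝ) + δ)) :
    ∀ x, Lq x ≤ q * ψ x ^ (q - 1) * L x := by
  intro x
  have integrated := mul_integral_le_integral_of_forall_mul_sub_le (F := fun a => a ^ q)
    (fun z => Real.rpow_nonneg (norm_nonneg z) _)
    (fun z => Real.mul_rpow_sub_one_mul_sub_le_rpow_sub_rpow (hψ (x + z)) (hψ x) hq)
    (hint x) (hintq x)
  rw [hLq, hL, mul_left_comm]
  exact mul_le_mul_of_nonpos_left integrated (by linarith)

/-- Ju's inequality: if `L` is the fractional Laplacian of order δ/2 of a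
nonnegative Schwartz function ψ and `Lq` that of ψ^q (given by the
singular-integral representation, assumed absolutely convergent), then
(-Δ)^(δ/2)(ψ^q)(x) ≤ q · ψ(x)^(q-1) · (-Δ)^(δ/2)ψ(x) for every x. -/
theorem stmt_2 (N : ℕ) (hN : 1 ≤ N) (δ q c : ℝ) (hδ : 0 < δ) (hδ2 : δ < 2)
    (hq : 1 ≤ q) (hc : 0 < c)
    (ψ : SchwartzMap (EuclideanSpace ℝ (Fin N)) ℝ)
    (hψ : ∀ x, 0 ≤ ψ x)
    (L Lq : EuclideanSpace ℝ (Fin N) → ℝ)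
    (hint : ∀ x, Integrable (fun z : EuclideanSpace ℝ (Fin N) =>
      (ψ (x + z) - ψ x) / ‖z‖ ^ ((N : ℝ) + δ)))
    (hintq : ∀ x, Integrable (fun z : EuclideanSpace ℝ (Fin N) =>
      (ψ (x + z) ^ q - ψ x ^ q) / ‖z‖ ^ ((N : ℝ) + δ)))
    (hL : ∀ x, L x = -c * ∫ z : EuclideanSpace ℝ (Fin N),
      (ψ (x + z) - ψ x) / ‖z‖ ^ ((N : ℝ) + δ))
    (hLq : ∀ x, Lq x = -c * ∫ z : EuclideanSpace ℝ (Fin N),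
      (ψ (x + z) ^ q - ψ x ^ q) / ‖z‖ ^ ((N : ℝ) + δ)) :
    ∀ x, Lq x ≤ q * ψ x ^ (q - 1) * L x :=
  stmt_2_general N δ q c hq hc ψ hψ L Lq hint hintq hL hLq
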